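/- arXiv:1604.02557 — 2 statements merged into one kernel-verified Lean document; each statement's English description precedes it below -/
import Mathlib

section
/- For every K > 0 there exist constants c > 0, ε₀ ∈ (0,1) and n₀ such that the following holds for every n = 2^k ≥ n₀ and every ε ∈ (0, ε₀): every linear algebraic algorithm that is (1 + Kε)-well conditioned and computes the Fourier ε-perturbation Id + εF makes at least c ε² n log₂ n steps. -/
open Matrix Finset

noncomputable section

/-- Walsh–Hadamard matrix of size `2^k`. -/
def WH (k : ℕ) : Matrix (Fin (2^k)) (Fin (2^k)) ℝ := fun i j =>
  ((-1 : ℝ) ^ (∑ b ∈ Finset.range k, ((i.val >>> b) % 2) * ((j.val >>> b) % 2))) /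
    Real.sqrt (2^k)

/-- Quasi-entropy `Φ(M)` (base-2 logs, `0·log 0 = 0`). -/
def qent {n : ℕ} (M : Matrix (Fin n) (Fin n) ℝ) : ℝ :=
  -∑ i, ∑ j, (M i j * M⁻¹ᵀ i j) * Real.logb 2 |M i j * M⁻¹ᵀ i j|

/-- Preconditioned quasi-entropy `Φ_{A,B}(M)`. -/
def qentP {n : ℕ} (A B M : Matrix (Fin n) (Fin n) ℝ) : ℝ :=
  -∑ i, ∑ j, ((M * A) i j * (M⁻¹ᵀ * B) i j) * Real.logb 2 |(M * A) i j * (M⁻¹ᵀ * B) i j|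

/-- Summand of the paired potential. -/
def pairS {n : ℕ} (P Q : Matrix (Fin n) (Fin n ⊕ Fin n) ℝ)
    (M : Matrix (Fin n) (Fin n) ℝ) (i j : Fin n) : ℝ :=
  (M * P) i (Sum.inl j) * (M⁻¹ᵀ * Q) i (Sum.inl j) +
    (M * P) i (Sum.inr j) * (M⁻¹ᵀ * Q) i (Sum.inr j)

/-- Paired potential `Φ̂_{P,Q}(M)` for preconditioners `P Q : n × 2n`. -/
def pairedPot {n : ℕ} (P Q : Matrix (Fin n) (Fin n ⊕ Fin n) ℝ)
    (M : Matrix (Fin n) (Fin n) ℝ) : ℝ :=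
  -∑ i, ∑ j, pairS P Q M i j * Real.logb 2 |pairS P Q M i j|

/-- Planar rotation matrix `R_{i,i',θ}`. -/
def rotMat {n : ℕ} (i i' : Fin n) (θ : ℝ) : Matrix (Fin n) (Fin n) ℝ :=
  Matrix.of fun a b =>
    if a = i ∧ b = i then Real.cos θ
    else if a = i ∧ b = i' then Real.sin θ
    else if a = i' ∧ b = i then -Real.sin θ
    else if a = i' ∧ b = i' then Real.cos θ
    else if a = b then 1 else 0

/-- Spectral norm (ℓ₂ operator norm) of a square real matrix. -/
def specNorm {n : ℕ} (M : Matrix (Fin n) (Fin n) ℝ) : ℝ :=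
  ‖LinearMap.toContinuousLinearMap (Matrix.toEuclideanLin M)‖

/-- Condition number `κ(M) = ‖M‖₂ ‖M⁻¹‖₂`. -/
def condNum {n : ℕ} (M : Matrix (Fin n) (Fin n) ℝ) : ℝ :=
  specNorm M * specNorm M⁻¹

/-- Singular values: square roots of eigenvalues of `Mᴴ M` (= `Mᵀ M` over ℝ). -/
def singVals {n : ℕ} (M : Matrix (Fin n) (Fin n) ℝ) (i : Fin n) : ℝ :=
  Real.sqrt ((Matrix.isHermitian_conjTranspose_mul_self M).eigenvalues i)

/-- Rotation step of the linear algebraic model. -/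
def IsRotStep {n : ℕ} (M M' : Matrix (Fin n) (Fin n) ℝ) : Prop :=
  ∃ (i i' : Fin n) (θ : ℝ), i < i' ∧ M' = rotMat i i' θ * M

/-- Constant gate: one row is multiplied by a nonzero constant. -/
def IsConstGate {n : ℕ} (M M' : Matrix (Fin n) (Fin n) ℝ) : Prop :=
  ∃ (r : Fin n) (c : ℝ), c ≠ 0 ∧ M' = Matrix.updateRow M r (c • M r)

/-- A single step of a linear algebraic algorithm. -/
def IsStep {n : ℕ} (M M' : Matrix (Fin n) (Fin n) ℝ) : Prop :=
  IsRotStep M M' ∨ IsConstGate M M'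

/-- `A` is an `m`-step linear algebraic algorithm. -/
def IsAlgorithm {n : ℕ} (m : ℕ) (A : ℕ → Matrix (Fin n) (Fin n) ℝ) : Prop :=
  A 0 = 1 ∧ ∀ t < m, IsStep (A t) (A (t+1))

/-- The algorithm is uniformly `κ`-well conditioned. -/
def WellConditioned {n : ℕ} (m : ℕ) (A : ℕ → Matrix (Fin n) (Fin n) ℝ) (κ : ℝ) : Prop :=
  ∀ t ≤ m, IsUnit (A t).det ∧ condNum (A t) ≤ κ

end

/-!
The potential is the quasi-entropy `Φ(M) = -∑ p log₂ |p|` over the entries `p` of `M ⊙ M⁻ᵀ`.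
A constant gate leaves `M ⊙ M⁻ᵀ` unchanged. A rotation in the plane `(i, i')` changes only rows
`i` and `i'` of `M ⊙ M⁻ᵀ` and preserves their sum in every column; since
`|h (a + b) - h a - h b| ≤ |a| + |b|` for `h x = -x log x`, `Φ` then moves by at most the
`ℓ¹`-norms of these four rows, and by Cauchy–Schwarz every row of `M ⊙ M⁻ᵀ` has `ℓ¹`-norm at
most `κ(M)`. Hence after `m` steps of a `κ`-well conditioned algorithm `|Φ| ≤ 4κm / log 2`.
On the other hand `F² = Id`, so `(Id + εF)⁻¹ = (Id - εF) / (1 - ε²)` and every off-diagonal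
entry of `(Id + εF) ⊙ (Id + εF)⁻ᵀ` equals `-ε² / (n (1 - ε²))`; these `n² - n` entries force
`Φ(Id + εF) ≤ -ε² n log₂ n / 2`.
-/

open Real
open scoped Matrix.Norms.L2Operator

lemma Real.negMulLog_neg (x : ℝ) : negMulLog (-x) = -negMulLog x := by
  simp [negMulLog, log_neg_eq_log]

lemma negMulLog_add_sub_mem_Icc {a b : ℝ} (ha : 0 ≤ a) (hb : 0 ≤ b) :
    negMulLog a + negMulLog b - negMulLog (a + b) ∈ Set.Icc 0 (a + b) := by
  rcases (add_nonneg ha hb).eq_or_lt with hs | hs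
  · obtain ⟨rfl, rfl⟩ : a = 0 ∧ b = 0 := ⟨by linarith, by linarith⟩
    simp
  set s := a + b
  have hu : a / s ∈ Set.Icc 0 1 := ⟨by positivity, div_le_one_of_le₀ (by linarith) hs.le⟩
  have hv : b / s ∈ Set.Icc 0 1 := ⟨by positivity, div_le_one_of_le₀ (by linarith) hs.le⟩
  have key : negMulLog a + negMulLog b - negMulLog s
      = s * (negMulLog (a / s) + negMulLog (b / s)) := by
    have ea : a = s * (a / s) := by field_simp
    have eb : b = s * (b / s) := by field_simp
    conv_lhs => rw [ea, eb, negMulLog_mul, negMulLog_mul]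
    field_simp
    ring
  have hsum : a / s + b / s = 1 := by rw [← add_div, div_self hs.ne']
  rw [key]
  constructor
  · exact mul_nonneg hs.le (add_nonneg (negMulLog_nonneg hu.1 hu.2) (negMulLog_nonneg hv.1 hv.2))
  · nlinarith [mul_le_mul_of_nonneg_left
      (add_le_add (negMulLog_le_one_sub_self hu.1) (negMulLog_le_one_sub_self hv.1)) hs.le]

lemma abs_negMulLog_add_sub_le (a b : ℝ) :
    |negMulLog a + negMulLog b - negMulLog (a + b)| ≤ |a| + |b| := by
  wlog hs : 0 ≤ a + b generalizing a b
  · have h := this (-a) (-b) (by linarith)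
    rwa [← neg_add, negMulLog_neg, negMulLog_neg, negMulLog_neg, abs_neg, abs_neg,
      ← abs_neg, show -(-negMulLog a + -negMulLog b - -negMulLog (a + b))
        = negMulLog a + negMulLog b - negMulLog (a + b) by ring] at h
  wlog hab : b ≤ a generalizing a b
  · rw [add_comm a, add_comm (negMulLog a), add_comm |a|]
    exact this b a (by linarith) (by linarith)
  obtain hb | hb := le_or_gt 0 b
  · obtain ⟨h0, h1⟩ := negMulLog_add_sub_mem_Icc (hb.trans hab) hb
    rwa [abs_of_nonneg h0, abs_of_nonneg hb, abs_of_nonneg (hb.trans hab)]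
  · -- for `b < 0 ≤ a + b`, apply the nonnegative case to the pair `(a + b, -b)`
    obtain ⟨h0, h1⟩ := negMulLog_add_sub_mem_Icc hs (neg_nonneg.2 hb.le)
    have : negMulLog a + negMulLog b - negMulLog (a + b)
        = -(negMulLog (a + b) + negMulLog (-b) - negMulLog (a + b + -b)) := by
      simp [negMulLog_neg]; ring
    rw [this, abs_neg, abs_of_nonneg h0, abs_of_neg hb, abs_of_nonneg (by linarith : 0 ≤ a)]
    linarith

lemma abs_negMulLog_sub_le_of_add_eq {a b a' b' : ℝ} (h : a' + b' = a + b) :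
    |negMulLog a' + negMulLog b' - negMulLog a - negMulLog b| ≤ |a| + |b| + |a'| + |b'| := by
  have h₁ := abs_negMulLog_add_sub_le a b
  have h₂ := abs_negMulLog_add_sub_le a' b'
  rw [h] at h₂
  calc _ = |(negMulLog a' + negMulLog b' - negMulLog (a + b))
          - (negMulLog a + negMulLog b - negMulLog (a + b))| := by congr 1; ring
    _ ≤ _ := (abs_sub _ _).trans (by linarith)

lemma abs_sum_negMulLog_sub_le {m n : Type*} [Fintype m] [Fintype n] {P P' : Matrix m n ℝ}
    {i i' : m} (hne : i ≠ i') (hrow : ∀ a, a ≠ i → a ≠ i' → P' a = P a)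
    (hcol : ∀ j, P' i j + P' i' j = P i j + P i' j) :
    |∑ a, ∑ j, negMulLog (P' a j) - ∑ a, ∑ j, negMulLog (P a j)|
      ≤ ∑ j, (|P i j| + |P i' j| + |P' i j| + |P' i' j|) := by
  rw [← Finset.sum_sub_distrib, Fintype.sum_eq_add i i' hne fun a ⟨ha, ha'⟩ ↦ by
      simp [hrow a ha ha'],
    ← Finset.sum_sub_distrib, ← Finset.sum_sub_distrib, ← Finset.sum_add_distrib]
  refine (Finset.abs_sum_le_sum_abs _ _).trans (Finset.sum_le_sum fun j _ ↦ ?_)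
  calc _ = |negMulLog (P' i j) + negMulLog (P' i' j) - negMulLog (P i j) - negMulLog (P i' j)| := by
        congr 1; ring
    _ ≤ _ := abs_negMulLog_sub_le_of_add_eq (hcol j)

lemma sqrt_sum_sq_col_le_l2_opNorm {m n : Type*} [Fintype m] [Fintype n] [DecidableEq n]
    (M : Matrix m n ℝ) (a : n) : √(∑ j, M j a ^ 2) ≤ ‖M‖ := by
  simpa [EuclideanSpace.norm_eq, Matrix.mulVec_single] using
    M.l2_opNorm_mulVec (EuclideanSpace.single a 1)

lemma sqrt_sum_sq_row_le_l2_opNorm {m n : Type*} [Fintype m] [Fintype n] [DecidableEq m]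
    [DecidableEq n] (M : Matrix m n ℝ) (a : m) : √(∑ j, M a j ^ 2) ≤ ‖M‖ := by
  have h := sqrt_sum_sq_col_le_l2_opNorm Mᴴ a
  rw [l2_opNorm_conjTranspose] at h
  simpa using h

section condNum

variable {n : ℕ} (M : Matrix (Fin n) (Fin n) ℝ)

lemma specNorm_eq_l2_opNorm : specNorm M = ‖M‖ := rfl

lemma condNum_eq : condNum M = ‖M‖ * ‖M⁻¹‖ := by
  rw [condNum, specNorm_eq_l2_opNorm, specNorm_eq_l2_opNorm]

lemma condNum_nonneg : 0 ≤ condNum M := by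
  rw [condNum_eq]
  positivity

lemma sum_abs_hadamard_inv_transpose_le_condNum (a : Fin n) :
    ∑ j, |(M ⊙ M⁻¹ᵀ) a j| ≤ condNum M :=
  calc ∑ j, |(M ⊙ M⁻¹ᵀ) a j| = ∑ j, |M a j| * |M⁻¹ j a| := by simp [abs_mul]
    _ ≤ √(∑ j, |M a j| ^ 2) * √(∑ j, |M⁻¹ j a| ^ 2) := Real.sum_mul_le_sqrt_mul_sqrt _ _ _
    _ ≤ ‖M‖ * ‖M⁻¹‖ := by
      simp only [sq_abs]
      exact mul_le_mul (sqrt_sum_sq_row_le_l2_opNorm M a) (sqrt_sum_sq_col_le_l2_opNorm M⁻¹ a)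
        (by positivity) (norm_nonneg _)
    _ = condNum M := (condNum_eq M).symm

end condNum

section rotMat

variable {n : ℕ} {i i' : Fin n}

lemma rotMat_mul_apply_left (hne : i ≠ i') (θ : ℝ) (M : Matrix (Fin n) (Fin n) ℝ) (j : Fin n) :
    (rotMat i i' θ * M) i j = cos θ * M i j + sin θ * M i' j := by
  rw [mul_apply, Fintype.sum_eq_add i i' hne]
  · simp [rotMat, Ne.symm hne]
  · rintro c ⟨hc, hc'⟩
    simp [rotMat, hc, hc', Ne.symm hc]

lemma rotMat_mul_apply_right (hne : i ≠ i') (θ : ℝ) (M : Matrix (Fin n) (Fin n) ℝ) (j : Fin n) :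
    (rotMat i i' θ * M) i' j = -sin θ * M i j + cos θ * M i' j := by
  rw [mul_apply, Fintype.sum_eq_add i i' hne]
  · simp [rotMat, hne, Ne.symm hne]
  · rintro c ⟨hc, hc'⟩
    simp [rotMat, hc, hc', Ne.symm hc', Ne.symm hne]

lemma rotMat_mul_apply_of_ne (θ : ℝ) (M : Matrix (Fin n) (Fin n) ℝ) {a : Fin n} (ha : a ≠ i)
    (ha' : a ≠ i') (j : Fin n) : (rotMat i i' θ * M) a j = M a j := by
  rw [mul_apply, Fintype.sum_eq_single a]
  · simp [rotMat, ha, ha']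
  · intro c hc
    simp [rotMat, ha, ha', Ne.symm hc]

lemma rotMat_mul_transpose_self (hne : i ≠ i') (θ : ℝ) :
    rotMat i i' θ * (rotMat i i' θ)ᵀ = 1 := by
  ext a b
  have hne' := Ne.symm hne
  by_cases ha : a = i
  · subst ha
    rw [rotMat_mul_apply_left hne]
    obtain rfl | hb := eq_or_ne b a
    · simp [rotMat, hne']
      linear_combination cos_sq_add_sin_sq θ
    obtain rfl | hb' := eq_or_ne b i'
    · simp [rotMat, hne, hne']; ring
    · simp [rotMat, hb, hb', hb.symm]
  by_cases ha' : a = i'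
  · subst ha'
    rw [rotMat_mul_apply_right hne]
    obtain rfl | hb := eq_or_ne b a
    · simp [rotMat, hne, hne']
      linear_combination sin_sq_add_cos_sq θ
    obtain rfl | hb' := eq_or_ne b i
    · simp [rotMat, hne']; ring
    · simp [rotMat, hb, hb', hb.symm]
  · rw [rotMat_mul_apply_of_ne θ _ ha ha']
    obtain rfl | hb := eq_or_ne b a
    · simp [rotMat, ha, ha']
    · simp [rotMat, hb, Ne.symm hb, ha, ha']

lemma inv_transpose_rotMat_mul (hne : i ≠ i') (θ : ℝ) (M : Matrix (Fin n) (Fin n) ℝ) :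
    (rotMat i i' θ * M)⁻¹ᵀ = rotMat i i' θ * M⁻¹ᵀ := by
  rw [Matrix.mul_inv_rev, inv_eq_right_inv (rotMat_mul_transpose_self hne θ), transpose_mul,
    transpose_transpose]

lemma hadamard_inv_transpose_rotMat_mul_of_ne (hne : i ≠ i') (θ : ℝ)
    (M : Matrix (Fin n) (Fin n) ℝ) {a : Fin n} (ha : a ≠ i) (ha' : a ≠ i') :
    ((rotMat i i' θ * M) ⊙ (rotMat i i' θ * M)⁻¹ᵀ) a = (M ⊙ M⁻¹ᵀ) a := by
  ext j
  rw [hadamard_apply, hadamard_apply, inv_transpose_rotMat_mul hne,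
    rotMat_mul_apply_of_ne θ _ ha ha', rotMat_mul_apply_of_ne θ _ ha ha']

lemma hadamard_inv_transpose_rotMat_mul_add (hne : i ≠ i') (θ : ℝ)
    (M : Matrix (Fin n) (Fin n) ℝ) (j : Fin n) :
    ((rotMat i i' θ * M) ⊙ (rotMat i i' θ * M)⁻¹ᵀ) i j
        + ((rotMat i i' θ * M) ⊙ (rotMat i i' θ * M)⁻¹ᵀ) i' j
      = (M ⊙ M⁻¹ᵀ) i j + (M ⊙ M⁻¹ᵀ) i' j := by
  simp only [hadamard_apply, inv_transpose_rotMat_mul hne, rotMat_mul_apply_left hne,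
    rotMat_mul_apply_right hne]
  linear_combination (M i j * M⁻¹ᵀ i j + M i' j * M⁻¹ᵀ i' j) * sin_sq_add_cos_sq θ

end rotMat

lemma updateRow_smul_eq_diagonal_mul {n K : Type*} [Fintype n] [DecidableEq n] [Field K]
    (M : Matrix n n K) (r : n) (c : K) :
    M.updateRow r (c • M r) = diagonal (Function.update 1 r c) * M := by
  ext a b
  by_cases ha : a = r
  · subst ha; simp
  · simp [ha]

lemma hadamard_inv_transpose_diagonal_mul {n K : Type*} [Fintype n] [DecidableEq n] [Field K]
    {d : n → K} (hd : ∀ i, d i ≠ 0) (M : Matrix n n K) :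
    (diagonal d * M) ⊙ (diagonal d * M)⁻¹ᵀ = M ⊙ M⁻¹ᵀ := by
  have hD : (diagonal d)⁻¹ = diagonal d⁻¹ :=
    inv_eq_right_inv (by rw [diagonal_mul_diagonal, ← diagonal_one]; congr; ext i; simp [hd i])
  ext a b
  simp only [hadamard_apply, transpose_apply, Matrix.mul_inv_rev, hD, diagonal_mul, mul_diagonal,
    Pi.inv_apply]
  field_simp [hd a]

lemma qent_eq_sum_negMulLog {n : ℕ} (M : Matrix (Fin n) (Fin n) ℝ) :
    qent M = (∑ i, ∑ j, negMulLog ((M ⊙ M⁻¹ᵀ) i j)) / log 2 := by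
  simp only [qent, Finset.sum_div, ← Finset.sum_neg_distrib]
  refine Fintype.sum_congr _ _ fun i ↦ Fintype.sum_congr _ _ fun j ↦ ?_
  rw [hadamard_apply, negMulLog, logb, log_abs]
  ring

lemma qent_one {n : ℕ} : qent (1 : Matrix (Fin n) (Fin n) ℝ) = 0 := by
  simp [qent, one_apply]

lemma abs_qent_sub_le_of_isStep {n : ℕ} {M M' : Matrix (Fin n) (Fin n) ℝ} (h : IsStep M M') :
    |qent M' - qent M| ≤ 2 * (condNum M + condNum M') / log 2 := by
  obtain ⟨i, i', θ, hlt, rfl⟩ | ⟨r, c, hc, rfl⟩ := h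
  · rw [qent_eq_sum_negMulLog, qent_eq_sum_negMulLog, ← sub_div, abs_div,
      abs_of_pos (log_pos one_lt_two)]
    gcongr
    refine (abs_sum_negMulLog_sub_le hlt.ne
      (fun a ha ha' ↦ hadamard_inv_transpose_rotMat_mul_of_ne hlt.ne θ M ha ha')
      (hadamard_inv_transpose_rotMat_mul_add hlt.ne θ M)).trans ?_
    simp only [Finset.sum_add_distrib]
    linarith [sum_abs_hadamard_inv_transpose_le_condNum M i,
      sum_abs_hadamard_inv_transpose_le_condNum M i',
      sum_abs_hadamard_inv_transpose_le_condNum (rotMat i i' θ * M) i,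
      sum_abs_hadamard_inv_transpose_le_condNum (rotMat i i' θ * M) i']
  · have hd : ∀ a, Function.update (1 : Fin n → ℝ) r c a ≠ 0 := by
      intro a
      by_cases ha : a = r <;> simp [ha, hc]
    rw [qent_eq_sum_negMulLog, qent_eq_sum_negMulLog, updateRow_smul_eq_diagonal_mul,
      hadamard_inv_transpose_diagonal_mul hd, sub_self, abs_zero]
    exact div_nonneg (mul_nonneg zero_le_two (add_nonneg (condNum_nonneg _) (condNum_nonneg _)))
      (log_nonneg one_le_two)

lemma abs_qent_le_of_isAlgorithm {n m : ℕ} {A : ℕ → Matrix (Fin n) (Fin n) ℝ} {κ : ℝ}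
    (hA : IsAlgorithm m A) (hκ : ∀ t ≤ m, condNum (A t) ≤ κ) :
    |qent (A m)| ≤ 4 * κ * m / log 2 := by
  suffices ∀ t ≤ m, |qent (A t)| ≤ 4 * κ * t / log 2 from this m le_rfl
  intro t
  induction t with
  | zero => simp [hA.1, qent_one]
  | succ t ih =>
    intro ht
    have hstep := abs_qent_sub_le_of_isStep (hA.2 t ht)
    calc |qent (A (t + 1))| ≤ |qent (A t)| + |qent (A (t + 1)) - qent (A t)| := by
          linarith [abs_sub_abs_le_abs_sub (qent (A (t + 1))) (qent (A t))]
      _ ≤ 4 * κ * t / log 2 + 2 * (κ + κ) / log 2 := by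
        gcongr
        · exact ih (by omega)
        · exact hstep.trans (by gcongr <;> exact hκ _ (by omega))
      _ = 4 * κ * (t + 1 : ℕ) / log 2 := by push_cast; ring

lemma inv_one_add_smul_of_mul_self {ι K : Type*} [Fintype ι] [DecidableEq ι] [Field K]
    {H : Matrix ι ι K} (hH : H * H = 1) {ε : K} (hε : ε ^ 2 ≠ 1) :
    (1 + ε • H)⁻¹ = (1 - ε ^ 2)⁻¹ • (1 - ε • H) := by
  refine inv_eq_right_inv ?_
  have h : (1 + ε • H) * (1 - ε • H) = (1 - ε ^ 2) • (1 : Matrix ι ι K) := by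
    rw [add_mul, mul_sub, mul_sub, smul_mul_smul_comm, hH, sub_smul, one_smul, sq]
    simp only [one_mul, mul_one]
    abel
  rw [mul_smul_comm, h, smul_smul, inv_mul_cancel₀ (sub_ne_zero.2 hε.symm), one_smul]

section involution

variable {n : ℕ} {H : Matrix (Fin n) (Fin n) ℝ} {ε : ℝ}

lemma hadamard_inv_transpose_one_add_smul_apply (hH : H * H = 1) (hHT : Hᵀ = H)
    (hHsq : ∀ i j, H i j ^ 2 = (n : ℝ)⁻¹) (hε : ε ^ 2 ≠ 1) (i j : Fin n) :
    ((1 + ε • H) ⊙ (1 + ε • H)⁻¹ᵀ) i j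
      = (if i = j then (1 - ε ^ 2)⁻¹ else 0) - ε ^ 2 / (n * (1 - ε ^ 2)) := by
  have hn : (n : ℝ) ≠ 0 := Nat.cast_ne_zero.2 (Fin.pos i).ne'
  have hε' : 1 - ε ^ 2 ≠ 0 := sub_ne_zero.2 hε.symm
  have h : ((1 + ε • H) ⊙ (1 + ε • H)⁻¹ᵀ) i j
      = ((1 : Matrix (Fin n) (Fin n) ℝ) i j - ε ^ 2 * H i j ^ 2) / (1 - ε ^ 2) := by
    rw [inv_one_add_smul_of_mul_self hH hε, transpose_smul, transpose_sub, transpose_one,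
      transpose_smul, hHT]
    obtain rfl | hij := eq_or_ne i j
    · simp [div_eq_inv_mul]; ring
    · simp [one_apply_ne hij, div_eq_inv_mul]; ring
  rw [h, hHsq]
  obtain rfl | hij := eq_or_ne i j
  · rw [one_apply_eq, if_pos rfl]; field_simp
  · rw [one_apply_ne hij, if_neg hij]; field_simp; ring

lemma negMulLog_neg_le_of_mul_le_one {β c : ℝ} (hβ : 0 < β) (hc : 0 < c) (h : β * c ≤ 1) :
    negMulLog (-β) ≤ -(β * log c) := by
  have hlog : log β + log c ≤ 0 := by
    rw [← log_mul hβ.ne' hc.ne']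
    exact log_nonpos (by positivity) h
  rw [negMulLog_neg, negMulLog]
  nlinarith

lemma sum_negMulLog_hadamard_inv_transpose_one_add_smul_le (hH : H * H = 1) (hHT : Hᵀ = H)
    (hHsq : ∀ i j, H i j ^ 2 = (n : ℝ)⁻¹) (hn : 2 ≤ n) (hε₀ : ε ≠ 0) (hε : ε ^ 2 ≤ 1 / 2) :
    ∑ i, ∑ j, negMulLog (((1 + ε • H) ⊙ (1 + ε • H)⁻¹ᵀ) i j) ≤ -(n * ε ^ 2 / 2 * log n) := by
  have hn' : (2 : ℝ) ≤ n := by exact_mod_cast hn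
  have hε1 : 0 < 1 - ε ^ 2 := by linarith
  set β := ε ^ 2 / (n * (1 - ε ^ 2)) with hβ
  have hdiag : 1 ≤ (1 - ε ^ 2)⁻¹ - β := by
    have : (1 - ε ^ 2)⁻¹ - β - 1 = ε ^ 2 * (n - 1) / (n * (1 - ε ^ 2)) := by
      rw [hβ]; field_simp; ring
    linarith [div_nonneg (mul_nonneg (sq_nonneg ε) (by linarith : (0 : ℝ) ≤ n - 1))
      (by positivity : (0 : ℝ) ≤ n * (1 - ε ^ 2))]
  have hβn : β * n ≤ 1 := by
    rw [hβ, div_mul_eq_mul_div, div_le_one (by positivity)]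
    nlinarith
  have hterm : ∀ i j, negMulLog (((1 + ε • H) ⊙ (1 + ε • H)⁻¹ᵀ) i j)
      ≤ (if i = j then β * log n else 0) - β * log n := by
    intro i j
    rw [hadamard_inv_transpose_one_add_smul_apply hH hHT hHsq (by linarith)]
    by_cases hij : i = j
    · rw [if_pos hij, if_pos hij, sub_self, negMulLog, neg_mul, neg_nonpos]
      exact mul_log_nonneg hdiag
    · rw [if_neg hij, if_neg hij, zero_sub, zero_sub]
      exact negMulLog_neg_le_of_mul_le_one (by positivity) (by positivity) hβn
  have hcoef : n * ε ^ 2 / 2 ≤ n * (n - 1) * β :=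
    calc n * ε ^ 2 / 2 ≤ (n - 1) * ε ^ 2 := by nlinarith
      _ ≤ (n - 1) * ε ^ 2 / (1 - ε ^ 2) :=
        le_div_self (by nlinarith) hε1 (by linarith [sq_nonneg ε])
      _ = n * (n - 1) * β := by rw [hβ]; field_simp
  calc _ ≤ ∑ i : Fin n, ∑ j : Fin n, ((if i = j then β * log n else 0) - β * log n) :=
        Finset.sum_le_sum fun i _ ↦ Finset.sum_le_sum fun j _ ↦ hterm i j
    _ = -(n * (n - 1) * β * log n) := by
        simp [Finset.sum_sub_distrib]; ring
    _ ≤ -(n * ε ^ 2 / 2 * log n) := by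
        nlinarith [log_nonneg (by linarith : (1 : ℝ) ≤ n)]

lemma qent_one_add_smul_le (hH : H * H = 1) (hHT : Hᵀ = H) (hHsq : ∀ i j, H i j ^ 2 = (n : ℝ)⁻¹)
    (hn : 2 ≤ n) (hε₀ : ε ≠ 0) (hε : ε ^ 2 ≤ 1 / 2) :
    qent (1 + ε • H) ≤ -(n * ε ^ 2 / 2 * logb 2 n) := by
  rw [qent_eq_sum_negMulLog, logb, mul_div_assoc', ← neg_div]
  exact div_le_div_of_nonneg_right
    (sum_negMulLog_hadamard_inv_transpose_one_add_smul_le hH hHT hHsq hn hε₀ hε)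
    (log_nonneg one_le_two)

end involution

lemma sum_fin_two_neg_one_pow (u v : Fin 2) :
    ∑ w : Fin 2, (-1 : ℝ) ^ (((u : ℕ) + v) * w) = if u = v then 2 else 0 := by
  fin_cases u <;> fin_cases v <;> norm_num [Fin.sum_univ_two]

lemma sum_neg_one_pow_sum_add_mul {k : ℕ} (x y : Fin k → Fin 2) :
    ∑ z : Fin k → Fin 2, (-1 : ℝ) ^ (∑ b, ((x b : ℕ) + y b) * z b)
      = if x = y then 2 ^ k else 0 := by
  simp_rw [← Finset.prod_pow_eq_pow_sum]
  rw [← Fintype.prod_sum (fun b (w : Fin 2) ↦ (-1 : ℝ) ^ (((x b : ℕ) + y b) * w))]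
  simp_rw [sum_fin_two_neg_one_pow, Finset.prod_ite_zero, Finset.prod_const, Finset.card_univ,
    Fintype.card_fin, funext_iff, Finset.mem_univ, true_implies]

-- The binary digits of `i : Fin (2 ^ k)` are the values of `finFunctionFinEquiv.symm i`.
lemma WH_apply (k : ℕ) (i j : Fin (2 ^ k)) :
    WH k i j = (-1 : ℝ) ^ (∑ b, (finFunctionFinEquiv.symm i b : ℕ) * finFunctionFinEquiv.symm j b)
      / √(2 ^ k) := by
  simp [WH, ← Fin.sum_univ_eq_sum_range, Nat.shiftRight_eq_div_pow,
    finFunctionFinEquiv_symm_apply_val]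

lemma WH_transpose (k : ℕ) : (WH k)ᵀ = WH k := by
  ext i j
  simp only [transpose_apply, WH_apply, mul_comm]

lemma WH_apply_sq (k : ℕ) (i j : Fin (2 ^ k)) : WH k i j ^ 2 = ((2 ^ k : ℕ) : ℝ)⁻¹ := by
  rw [WH_apply, div_pow, ← pow_mul, mul_comm, pow_mul, neg_one_sq, one_pow,
    sq_sqrt (by positivity), one_div, Nat.cast_pow, Nat.cast_ofNat]

lemma WH_mul_self (k : ℕ) : WH k * WH k = 1 := by
  ext i j
  rw [mul_apply, ← finFunctionFinEquiv.sum_comp]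
  simp only [WH_apply, Equiv.symm_apply_apply, div_mul_div_comm, ← pow_add,
    ← Finset.sum_add_distrib, mul_self_sqrt (by positivity : (0 : ℝ) ≤ 2 ^ k), ← Finset.sum_div]
  set x := finFunctionFinEquiv.symm i
  set y := finFunctionFinEquiv.symm j
  have hexp : ∀ z : Fin k → Fin 2,
      ∑ b, ((x b : ℕ) * z b + z b * y b) = ∑ b, ((x b : ℕ) + y b) * z b :=
    fun z ↦ Finset.sum_congr rfl fun b _ ↦ by ring
  simp_rw [hexp, sum_neg_one_pow_sum_add_mul]
  obtain rfl | hij := eq_or_ne i j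
  · rw [if_pos rfl, one_apply_eq, div_self (by positivity)]
  · rw [if_neg (finFunctionFinEquiv.symm.injective.ne hij), one_apply_ne hij, zero_div]

lemma qent_one_add_smul_WH_le {k : ℕ} (hk : 2 ≤ 2 ^ k) {ε : ℝ} (hε₀ : ε ≠ 0)
    (hε : ε ^ 2 ≤ 1 / 2) :
    qent (1 + ε • WH k) ≤ -(2 ^ k * ε ^ 2 / 2 * logb 2 (2 ^ k)) := by
  simpa using qent_one_add_smul_le (WH_mul_self k) (WH_transpose k) (WH_apply_sq k) hk hε₀ hε

theorem lower_bound_eps_sq_general (K : ℝ) :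
    ∃ c > (0:ℝ), ∃ ε₀ ∈ Set.Ioo (0:ℝ) 1, ∃ n₀ : ℕ,
      ∀ k : ℕ, n₀ ≤ 2^k → ∀ ε : ℝ, 0 < ε → ε < ε₀ →
        ∀ (m : ℕ) (A : ℕ → Matrix (Fin (2^k)) (Fin (2^k)) ℝ),
          IsAlgorithm m A → A m = 1 + ε • WH k →
          WellConditioned m A (1 + K * ε) →
          c * ε^2 * 2^k * Real.logb 2 (2^k) ≤ m := by
  refine ⟨1 / 32, by norm_num, 1 / (|K| + 2), ⟨by positivity, ?_⟩, 2, ?_⟩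
  · rw [div_lt_one (by positivity)]
    linarith [abs_nonneg K]
  intro k hk ε hε hεε₀ m A hA hAm hWC
  have hε₀ : ε * (|K| + 2) < 1 := (lt_div_iff₀ (by positivity)).1 (by simpa using hεε₀)
  have hκ : 1 + K * ε ≤ 2 := by nlinarith [le_abs_self K, abs_nonneg K]
  have hlower := qent_one_add_smul_WH_le hk hε.ne' (by nlinarith [abs_nonneg K])
  have hupper := abs_qent_le_of_isAlgorithm hA fun t ht ↦ (hWC t ht).2.trans hκ
  rw [← hAm] at hlower
  have hm : 4 * 2 * (m : ℝ) / log 2 ≤ 16 * m := by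
    rw [div_le_iff₀ (log_pos one_lt_two)]
    nlinarith [Real.log_two_gt_d9, m.cast_nonneg (α := ℝ)]
  calc 1 / 32 * ε ^ 2 * 2 ^ k * logb 2 (2 ^ k) = (2 ^ k * ε ^ 2 / 2 * logb 2 (2 ^ k)) / 16 := by
        ring
    _ ≤ |qent (A m)| / 16 := by gcongr; linarith [neg_abs_le (qent (A m))]
    _ ≤ m := by linarith

/-- every `(1+Kε)`-well conditioned linear algebraic algorithm computing
`Id + εF` makes at least `c ε² n log₂ n` steps. -/
theorem lower_bound_eps_sq (K : ℝ) (hK : 0 < K) :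
    ∃ c > (0:ℝ), ∃ ε₀ ∈ Set.Ioo (0:ℝ) 1, ∃ n₀ : ℕ,
      ∀ k : ℕ, n₀ ≤ 2^k → ∀ ε : ℝ, 0 < ε → ε < ε₀ →
        ∀ (m : ℕ) (A : ℕ → Matrix (Fin (2^k)) (Fin (2^k)) ℝ),
          IsAlgorithm m A → A m = 1 + ε • WH k →
          WellConditioned m A (1 + K * ε) →
          c * ε^2 * 2^k * Real.logb 2 (2^k) ≤ m :=
  lower_bound_eps_sq_general K
end

section
/- There exist constants α ∈ (0, 1/2), c > 0 and n₀ such that for every n = 2^k ≥ n₀ and every ε with n^{−α} ≤ ε ≤ α, the paired potential of the Fourier ε-perturbation with preconditioners P = [Id, −F], Q = [F, Id] satisfies Φ̂_{P,Q}(Id + εF) ≥ c ε n log₂ n, where F is the n×n Walsh–Hadamard matrix. -/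
open Matrix Finset

/-! For a symmetric involution `F`, `(Id + εF)⁻ᵀ = (1 - ε²)⁻¹ (Id - εF)`, and expanding the
products gives `s(i,j) = 2ε(1 - ε²)⁻¹ (F(i,j)² - δᵢⱼ)`. For the Walsh–Hadamard matrix every
`F(i,j)²` equals `1/n`, so with `a = 2ε(1 - ε²)⁻¹` the matrix `s` is `a/n` off the diagonal
and `a/n - a` on it. Every row of `s` sums to zero, hence the `log₂ |a/n|` contributions
cancel and `Φ̂ = 2ε(1 - ε²)⁻¹ (n - 1) log₂ (n - 1)`, which is at least `ε n log₂ n / 2` for `n ≥ 4`. -/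

lemma Fin.sum_ite_eq_add_mul {n : ℕ} (i : Fin n) (X Y : ℝ) :
    ∑ j : Fin n, (if i = j then X else Y) = X + (n - 1) * Y := by
  rw [Fintype.sum_eq_add_sum_compl i, if_pos rfl,
    Finset.sum_congr rfl fun j hj => if_neg (Ne.symm (by simpa using hj))]
  simp [Finset.card_compl, Nat.cast_sub i.pos]

lemma mul_logb_abs_mul (b x y : ℝ) :
    x * y * Real.logb b |x * y| = x * y * (Real.logb b |x| + Real.logb b |y|) := by
  rcases eq_or_ne x 0 with rfl | hx
  · simp
  rcases eq_or_ne y 0 with rfl | hy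
  · simp
  rw [abs_mul, Real.logb_mul (abs_ne_zero.2 hx) (abs_ne_zero.2 hy)]

lemma pairedPot_eq_of_pairS_eq {n : ℕ} {P Q : Matrix (Fin n) (Fin n ⊕ Fin n) ℝ}
    {M : Matrix (Fin n) (Fin n) ℝ} (a : ℝ)
    (h : ∀ i j, pairS P Q M i j = a * ((n : ℝ)⁻¹ - if i = j then 1 else 0)) :
    pairedPot P Q M = a * (n - 1) * Real.logb 2 (n - 1) := by
  rcases Nat.eq_zero_or_pos n with rfl | hn
  · simp [pairedPot]
  set b := a / n with hb
  have hs : ∀ i j, pairS P Q M i j = if i = j then b * (1 - n) else b := by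
    intro i j
    rw [h, hb]
    split_ifs
    · field_simp
    · rw [sub_zero, div_eq_mul_inv]
  have hdiag : b * (1 - n) * Real.logb 2 |b * (1 - n)| =
      b * (1 - n) * (Real.logb 2 |b| + Real.logb 2 (n - 1)) := by
    rw [mul_logb_abs_mul, abs_sub_comm, Real.logb_abs 2 ((n : ℝ) - 1)]
  simp only [pairedPot, hs, apply_ite (fun x => x * Real.logb 2 |x|), Fin.sum_ite_eq_add_mul,
    Finset.sum_const, Finset.card_univ, Fintype.card_fin, nsmul_eq_mul, hdiag]
  rw [hb]
  field_simp
  ring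

section Involution

variable {n : ℕ} {F : Matrix (Fin n) (Fin n) ℝ} {ε : ℝ}

lemma inv_transpose_one_add_smul (hFF : F * F = 1) (hF : F.IsSymm) (hε : 1 - ε^2 ≠ 0) :
    (1 + ε • F)⁻¹ᵀ = (1 - ε^2)⁻¹ • (1 - ε • F) := by
  have hmul : (1 + ε • F) * (1 - ε • F) = (1 - ε^2) • 1 := by
    rw [mul_sub, mul_one, Matrix.mul_smul, add_mul, one_mul, Matrix.smul_mul, hFF]
    module
  have hinv : (1 + ε • F) * ((1 - ε^2)⁻¹ • (1 - ε • F)) = 1 := by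
    rw [Matrix.mul_smul, hmul, smul_smul, inv_mul_cancel₀ hε, one_smul]
  rw [inv_eq_right_inv hinv, transpose_smul, transpose_sub, transpose_one, transpose_smul, hF.eq]

lemma pairS_one_add_smul (hFF : F * F = 1) (hF : F.IsSymm) (hε : 1 - ε^2 ≠ 0) (i j : Fin n) :
    pairS (fromCols 1 (-F)) (fromCols F 1) (1 + ε • F) i j =
      2 * ε * (1 - ε^2)⁻¹ * (F i j ^ 2 - if i = j then 1 else 0) := by
  have hP : (1 + ε • F) * -F = -(F + ε • 1) := by
    rw [mul_neg, add_mul, one_mul, Matrix.smul_mul, hFF]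
  have hQ : (1 - ε • F) * F = F - ε • 1 := by
    rw [sub_mul, one_mul, Matrix.smul_mul, hFF]
  simp only [pairS, mul_fromCols, fromCols_apply_inl, fromCols_apply_inr,
    inv_transpose_one_add_smul hFF hF hε, Matrix.smul_mul, hP, hQ, mul_one, Matrix.add_apply,
    Matrix.sub_apply, Matrix.neg_apply, Matrix.smul_apply, one_apply, smul_eq_mul]
  split_ifs <;> ring

lemma pairedPot_one_add_smul (hFF : F * F = 1) (hF : F.IsSymm)
    (hflat : ∀ i j, F i j ^ 2 = (n : ℝ)⁻¹) (hε : 1 - ε^2 ≠ 0) :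
    pairedPot (fromCols 1 (-F)) (fromCols F 1) (1 + ε • F) =
      2 * ε * (1 - ε^2)⁻¹ * (n - 1) * Real.logb 2 (n - 1) :=
  pairedPot_eq_of_pairS_eq _ fun i j => by rw [pairS_one_add_smul hFF hF hε, hflat]

end Involution

lemma sum_fin_two_neg_one_pow_mul (a c : Fin 2) :
    ∑ x : Fin 2, (-1 : ℝ) ^ ((a : ℕ) * x) * (-1) ^ ((x : ℕ) * c) = if a = c then 2 else 0 := by
  fin_cases a <;> fin_cases c <;> norm_num

namespace WH

variable {k : ℕ}

-- `finFunctionFinEquiv.symm i` is the vector of binary digits of `i`.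
lemma apply_eq_prod (i j : Fin (2^k)) :
    WH k i j = (∏ b : Fin k, (-1 : ℝ) ^ ((finFunctionFinEquiv.symm i b : ℕ) *
      (finFunctionFinEquiv.symm j b : ℕ))) / Real.sqrt (2^k) := by
  simp only [WH, Finset.prod_pow_eq_pow_sum, finFunctionFinEquiv_symm_apply_val,
    Nat.shiftRight_eq_div_pow, Finset.sum_range (fun b => i.val / 2^b % 2 * (j.val / 2^b % 2))]

lemma isSymm : (WH k).IsSymm := by
  ext i j
  simp only [transpose_apply, WH, Nat.mul_comm]

lemma apply_sq (i j : Fin (2^k)) : WH k i j ^ 2 = ((2^k : ℕ) : ℝ)⁻¹ := by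
  rw [WH, div_pow, ← pow_mul, pow_mul', neg_one_sq, one_pow,
    Real.sq_sqrt (by positivity)]
  push_cast
  ring

lemma mul_self : WH k * WH k = 1 := by
  ext i j
  have hsqrt : Real.sqrt (2^k) * Real.sqrt (2^k) = (2:ℝ)^k := Real.mul_self_sqrt (by positivity)
  calc (WH k * WH k) i j
      = (∏ b, ∑ x : Fin 2, (-1 : ℝ) ^ ((finFunctionFinEquiv.symm i b : ℕ) * x) *
          (-1) ^ ((x : ℕ) * finFunctionFinEquiv.symm j b)) / 2^k := by
        rw [Fintype.prod_sum, ← finFunctionFinEquiv.symm.sum_comp, mul_apply, ← hsqrt,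
          Finset.sum_div]
        refine Fintype.sum_congr _ _ fun l => ?_
        rw [apply_eq_prod, apply_eq_prod, div_mul_div_comm, ← Finset.prod_mul_distrib]
    _ = (1 : Matrix (Fin (2^k)) (Fin (2^k)) ℝ) i j := by
        simp only [sum_fin_two_neg_one_pow_mul, Fintype.prod_ite_zero, Finset.prod_const,
          Finset.card_univ, Fintype.card_fin, ← funext_iff,
          finFunctionFinEquiv.symm.injective.eq_iff, one_apply]
        split_ifs <;> simp

end WH

lemma pairedPot_one_add_smul_WH (k : ℕ) {ε : ℝ} (hε : 1 - ε^2 ≠ 0) :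
    pairedPot (fromCols 1 (-WH k)) (fromCols (WH k) 1) (1 + ε • WH k) =
      2 * ε * (1 - ε^2)⁻¹ * (2^k - 1) * Real.logb 2 (2^k - 1) := by
  simpa using pairedPot_one_add_smul WH.mul_self WH.isSymm WH.apply_sq hε

lemma mul_logb_le_four_mul_sub_one_mul_logb {x : ℝ} (hx : 4 ≤ x) :
    x * Real.logb 2 x ≤ 4 * ((x - 1) * Real.logb 2 (x - 1)) := by
  have hlog : 2 ≤ Real.logb 2 x := by
    rw [Real.le_logb_iff_rpow_le one_lt_two (by linarith)]
    norm_num [hx]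
  have hlog_half : Real.logb 2 (x / 2) = Real.logb 2 x - 1 := by
    rw [Real.logb_div (by linarith) two_ne_zero, Real.logb_self_eq_one one_lt_two]
  have hlog_sub : Real.logb 2 x - 1 ≤ Real.logb 2 (x - 1) :=
    hlog_half ▸ Real.logb_le_logb_of_le one_lt_two (by linarith) (by linarith)
  nlinarith

/-- `Φ̂_{P,Q}(Id + εF) ≥ c ε n log₂ n` for `n^{-α} ≤ ε ≤ α`,
with `P = [Id,-F]`, `Q = [F,Id]`. -/
theorem pairedPot_perturbation_lower :
    ∃ α ∈ Set.Ioo (0:ℝ) (1/2), ∃ c > (0:ℝ), ∃ n₀ : ℕ,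
      ∀ k : ℕ, n₀ ≤ 2^k → ∀ ε : ℝ, ((2^k : ℝ)) ^ (-α) ≤ ε → ε ≤ α →
        c * ε * 2^k * Real.logb 2 (2^k) ≤
          pairedPot (Matrix.fromCols 1 (-WH k)) (Matrix.fromCols (WH k) 1)
            (1 + ε • WH k) := by
  refine ⟨1/4, ⟨by norm_num, by norm_num⟩, 1/2, by norm_num, 4, fun k hk ε hε_lower hε_upper => ?_⟩
  have hε : 0 < ε := (Real.rpow_pos_of_pos (by positivity) _).trans_le hε_lower
  have hε_sq : 0 < 1 - ε^2 := by nlinarith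
  have hn : (4 : ℝ) ≤ 2^k := by exact_mod_cast hk
  have hlog_nonneg : 0 ≤ Real.logb 2 (2^k - 1) := Real.logb_nonneg one_lt_two (by linarith)
  have hinv : 1 ≤ (1 - ε^2)⁻¹ := (one_le_inv₀ hε_sq).2 (by nlinarith)
  rw [pairedPot_one_add_smul_WH k hε_sq.ne']
  calc 1/2 * ε * 2^k * Real.logb 2 (2^k)
      ≤ 2 * ε * 1 * (2^k - 1) * Real.logb 2 (2^k - 1) := by
        nlinarith [mul_logb_le_four_mul_sub_one_mul_logb hn]
    _ ≤ 2 * ε * (1 - ε^2)⁻¹ * (2^k - 1) * Real.logb 2 (2^k - 1) := by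
        gcongr
        linarith
end
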